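/- arXiv:2410.13529 — 9 statements merged into one kernel-verified Lean document; each statement's English description precedes it below -/
import Mathlib

section
/- Let K be a field of characteristic 2, let a₀, a₁, a₂ ∈ K and F(w) = a₀ + a₁·w + a₂·w². Let βᵢ, βⱼ, βₖ ∈ K be pairwise distinct and set Zᵢ = F(βᵢ), Zⱼ = F(βⱼ), Zₖ = F(βₖ). Then a₁ + a₂ = [ (βⱼ + βₖ + 1)(βₖ + βⱼ)·Zᵢ + (βᵢ + βₖ + 1)(βᵢ + βₖ)·Zⱼ + (βᵢ + βⱼ + 1)(βⱼ + βᵢ)·Zₖ ] / [ (βᵢ + βⱼ)(βᵢ + βₖ)(βⱼ + βₖ) ] (all additions are in K, where subtraction coincides with addition since char K = 2). -/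
/-!
Since `a₀ + a₀ = 0` in characteristic 2, `a₁ + a₂ = F 0 + F 1`. Lagrange interpolation through
the three shares evaluates `F` at `0` and at `1`; adding the two evaluations, the weight of `F x`
becomes `((0 - y)(0 - z) + (1 - y)(1 - z)) / ((x - y)(x - z)) = (y + z + 1) / ((x + y)(x + z))`.
-/

def lagrangeBasisThree {K : Type*} [Field K] (x y z t : K) : K :=
  (t - y) * (t - z) / ((x - y) * (x - z))

theorem quadratic_eq_lagrange_three {K : Type*} [Field K] (a₀ a₁ a₂ : K) (F : K → K)
    (hF : ∀ w, F w = a₀ + a₁ * w + a₂ * w ^ 2) {x y z : K} (hxy : x ≠ y) (hxz : x ≠ z)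
    (hyz : y ≠ z) (t : K) :
    F t = lagrangeBasisThree x y z t * F x + lagrangeBasisThree y x z t * F y +
      lagrangeBasisThree z x y t * F z := by
  have hxy' : x - y ≠ 0 := sub_ne_zero.mpr hxy
  have hxz' : x - z ≠ 0 := sub_ne_zero.mpr hxz
  have hyz' : y - z ≠ 0 := sub_ne_zero.mpr hyz
  have hyx' : y - x ≠ 0 := sub_ne_zero.mpr hxy.symm
  have hzx' : z - x ≠ 0 := sub_ne_zero.mpr hxz.symm
  have hzy' : z - y ≠ 0 := sub_ne_zero.mpr hyz.symm
  simp only [lagrangeBasisThree, hF]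
  field_simp
  ring

section CharTwo

variable {K : Type*} [Field K] [CharP K 2]

theorem add_add_eq_eval_zero_add_eval_one (a₀ a₁ a₂ : K) (F : K → K)
    (hF : ∀ w, F w = a₀ + a₁ * w + a₂ * w ^ 2) : a₁ + a₂ = F 0 + F 1 := by
  rw [hF, hF]
  linear_combination -CharTwo.add_self_eq_zero a₀

theorem lagrangeBasisThree_zero_add_one (x y z : K) :
    lagrangeBasisThree x y z 0 + lagrangeBasisThree x y z 1 = (y + z + 1) / ((x + y) * (x + z)) := by
  simp only [lagrangeBasisThree, ← add_div, CharTwo.sub_eq_add]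
  congr 1
  linear_combination y * z * CharTwo.two_eq_zero (R := K)

end CharTwo

/-- Reconstruction formula (Case 1) for the conventional 3-threshold scheme:
in characteristic 2, three shares at pairwise distinct points recover `a₁ + a₂`. -/
theorem stmt_1 {K : Type*} [Field K] [CharP K 2] (a₀ a₁ a₂ : K)
    (F : K → K) (hF : ∀ w, F w = a₀ + a₁ * w + a₂ * w ^ 2)
    (βi βj βk : K) (hij : βi ≠ βj) (hik : βi ≠ βk) (hjk : βj ≠ βk)
    (Zi Zj Zk : K) (hZi : Zi = F βi) (hZj : Zj = F βj) (hZk : Zk = F βk) :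
    a₁ + a₂ =
      ((βj + βk + 1) * (βk + βj) * Zi + (βi + βk + 1) * (βi + βk) * Zj +
        (βi + βj + 1) * (βj + βi) * Zk) /
      ((βi + βj) * (βi + βk) * (βj + βk)) := by
  have hij' : βi + βj ≠ 0 := fun h ↦ hij (CharTwo.add_eq_zero.mp h)
  have hik' : βi + βk ≠ 0 := fun h ↦ hik (CharTwo.add_eq_zero.mp h)
  have hjk' : βj + βk ≠ 0 := fun h ↦ hjk (CharTwo.add_eq_zero.mp h)
  have lagrange := quadratic_eq_lagrange_three a₀ a₁ a₂ F hF hij hik hjk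
  calc a₁ + a₂ = F 0 + F 1 := add_add_eq_eval_zero_add_eval_one a₀ a₁ a₂ F hF
    _ = (lagrangeBasisThree βi βj βk 0 + lagrangeBasisThree βi βj βk 1) * Zi +
          (lagrangeBasisThree βj βi βk 0 + lagrangeBasisThree βj βi βk 1) * Zj +
          (lagrangeBasisThree βk βi βj 0 + lagrangeBasisThree βk βi βj 1) * Zk := by
      rw [lagrange 0, lagrange 1, hZi, hZj, hZk]
      ring
    _ = (βj + βk + 1) / ((βi + βj) * (βi + βk)) * Zi + (βi + βk + 1) / ((βj + βi) * (βj + βk)) * Zj +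
          (βi + βj + 1) / ((βk + βi) * (βk + βj)) * Zk := by
      simp only [lagrangeBasisThree_zero_add_one]
    _ = _ := by
      rw [add_comm βj βi, add_comm βk βi, add_comm βk βj]
      field_simp
end

section
/- In the basis setting for the new conventional 3-threshold scheme, let s ∈ F, let a₀, a₁ ∈ K, set a₂ = π(a₁) + s, and let F(w) = a₀ + a₁·w + a₂·w². Then for any two distinct β, β' ∈ K with shares Z = F(β) and Z' = F(β'), the secret is recovered as s = a₂ + π( ((Z + a₂·β²) + (Z' + a₂·β'²)) / (β + β') ). -/
/-- In the basis setting (`K` a finite field of characteristic 2, `F` a subfield,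
`π : K → F` the `F`-linear coordinate functional with `π 1 = 1`), the secret
`s` is recovered from the special share `a₂ = π a₁ + s` and two ordinary shares
as `s = a₂ + π (((Z + a₂ β²) + (Z' + a₂ β'²)) / (β + β'))`. -/
theorem stmt_3 {F K : Type*} [Field F] [Field K] [Algebra F K] [CharP K 2] [Finite K]
    (π : K →ₗ[F] F) (hπ1 : π 1 = 1)
    (s : F) (a₀ a₁ : K) (a₂ : F) (ha₂ : a₂ = π a₁ + s)
    (Fn : K → K)
    (hFn : ∀ w, Fn w = a₀ + a₁ * w + algebraMap F K a₂ * w ^ 2)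
    (β β' : K) (hβ : β ≠ β')
    (Z Z' : K) (hZ : Z = Fn β) (hZ' : Z' = Fn β') :
    s = a₂ + π (((Z + algebraMap F K a₂ * β ^ 2) +
      (Z' + algebraMap F K a₂ * β' ^ 2)) / (β + β')) := by
  haveI : CharP F 2 := RingHom.charP (algebraMap F K) (algebraMap F K).injective 2
  have h2K : ∀ x : K, x + x = 0 := fun x => by
    have := CharTwo.add_self_eq_zero (R := K) x; exact this
  have hd : β + β' ≠ 0 := fun h => hβ (by
    have : β = -β' := by linear_combination h
    simpa [CharTwo.neg_eq] using this)
  have harg : ((Z + algebraMap F K a₂ * β ^ 2) +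
      (Z' + algebraMap F K a₂ * β' ^ 2)) / (β + β') = a₁ := by
    rw [hZ, hZ', hFn, hFn, div_eq_iff hd]
    ring_nf
    rw [CharTwo.two_eq_zero]
    ring
  rw [harg, ha₂]
  have : π a₁ + π a₁ = 0 := CharTwo.add_self_eq_zero _
  linear_combination -this
end

section
/- In the basis setting for the new conventional 3-threshold scheme, let s ∈ F, let a₀, a₁ ∈ K, set a₂ = π(a₁) + s, and let F(w) = a₀ + a₁·w + a₂·w². Then for any pairwise distinct βᵢ, βⱼ, βₖ ∈ K with shares Zᵢ = F(βᵢ), Zⱼ = F(βⱼ), Zₖ = F(βₖ), the secret is recovered as s = π( [ (βⱼ + βₖ + 1)(βₖ + βⱼ)·Zᵢ + (βᵢ + βₖ + 1)(βᵢ + βₖ)·Zⱼ + (βᵢ + βⱼ + 1)(βⱼ + βᵢ)·Zₖ ] / [ (βᵢ + βⱼ)(βᵢ + βₖ)(βⱼ + βₖ) ] ). -/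
/-! The reconstruction expression equals `∑ Zᵢ (1 + βⱼ + βₖ) / ((βᵢ + βⱼ)(βᵢ + βₖ))`: the sum of the
linear and the quadratic coefficient of the Lagrange interpolant through the three shares, that is
`a₁ + a₂`. Applying `π` gives `π a₁ + π a₁ + s`, and `π a₁ + π a₁ = 0` in characteristic 2. -/

theorem CharTwo.add_ne_zero_of_ne {R : Type*} [Ring R] [CharP R 2] {a b : R} (h : a ≠ b) :
    a + b ≠ 0 :=
  CharTwo.add_eq_zero.not.mpr h

theorem lagrange_linear_add_quadratic_coeff {K : Type*} [Field K] {c₀ c₁ c₂ : K} {f : K → K}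
    (hf : ∀ w, f w = c₀ + c₁ * w + c₂ * w ^ 2)
    {βi βj βk : K} (hij : βi ≠ βj) (hik : βi ≠ βk) (hjk : βj ≠ βk) :
    (1 - βj - βk) * f βi / ((βi - βj) * (βi - βk)) +
      (1 - βi - βk) * f βj / ((βj - βi) * (βj - βk)) +
      (1 - βi - βj) * f βk / ((βk - βi) * (βk - βj)) = c₁ + c₂ := by
  simp only [hf]
  field_simp
  ring

theorem CharTwo.lagrange_linear_add_quadratic_coeff {K : Type*} [Field K] [CharP K 2]
    {c₀ c₁ c₂ : K} {f : K → K} (hf : ∀ w, f w = c₀ + c₁ * w + c₂ * w ^ 2)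
    {βi βj βk : K} (hij : βi ≠ βj) (hik : βi ≠ βk) (hjk : βj ≠ βk) :
    ((βj + βk + 1) * (βk + βj) * f βi + (βi + βk + 1) * (βi + βk) * f βj +
        (βi + βj + 1) * (βj + βi) * f βk) /
      ((βi + βj) * (βi + βk) * (βj + βk)) = c₁ + c₂ := by
  have hij' := CharTwo.add_ne_zero_of_ne hij
  have hik' := CharTwo.add_ne_zero_of_ne hik
  have hjk' := CharTwo.add_ne_zero_of_ne hjk
  rw [← _root_.lagrange_linear_add_quadratic_coeff hf hij hik hjk]
  simp only [CharTwo.sub_eq_add, add_comm βj βi, add_comm βk βi, add_comm βk βj]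
  field_simp
  ring

theorem LinearMap.map_algebraMap_of_map_one {F K : Type*} [Field F] [Ring K] [Algebra F K]
    (π : K →ₗ[F] F) (hπ1 : π 1 = 1) (c : F) : π (algebraMap F K c) = c := by
  rw [Algebra.algebraMap_eq_smul_one, map_smul, hπ1, smul_eq_mul, mul_one]

theorem stmt_4_general {F K : Type*} [Field F] [Field K] [Algebra F K] [CharP K 2]
    (π : K →ₗ[F] F) (hπ1 : π 1 = 1)
    (s : F) (a₀ a₁ : K) (a₂ : F) (ha₂ : a₂ = π a₁ + s)
    (Fn : K → K)
    (hFn : ∀ w, Fn w = a₀ + a₁ * w + algebraMap F K a₂ * w ^ 2)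
    (βi βj βk : K) (hij : βi ≠ βj) (hik : βi ≠ βk) (hjk : βj ≠ βk)
    (Zi Zj Zk : K) (hZi : Zi = Fn βi) (hZj : Zj = Fn βj) (hZk : Zk = Fn βk) :
    s = π (((βj + βk + 1) * (βk + βj) * Zi + (βi + βk + 1) * (βi + βk) * Zj +
        (βi + βj + 1) * (βj + βi) * Zk) /
      ((βi + βj) * (βi + βk) * (βj + βk))) := by
  have : CharP F 2 := (Algebra.charP_iff F K 2).mpr inferInstance
  subst hZi hZj hZk
  rw [CharTwo.lagrange_linear_add_quadratic_coeff hFn hij hik hjk, map_add,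
    π.map_algebraMap_of_map_one hπ1, ha₂, ← add_assoc, CharTwo.add_self_eq_zero, zero_add]

/-- In the basis setting, three ordinary shares at pairwise distinct points
recover the secret `s` via the Lagrange-type reconstruction formula. -/
theorem stmt_4 {F K : Type*} [Field F] [Field K] [Algebra F K] [CharP K 2] [Finite K]
    (π : K →ₗ[F] F) (hπ1 : π 1 = 1)
    (s : F) (a₀ a₁ : K) (a₂ : F) (ha₂ : a₂ = π a₁ + s)
    (Fn : K → K)
    (hFn : ∀ w, Fn w = a₀ + a₁ * w + algebraMap F K a₂ * w ^ 2)
    (βi βj βk : K) (hij : βi ≠ βj) (hik : βi ≠ βk) (hjk : βj ≠ βk)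
    (Zi Zj Zk : K) (hZi : Zi = Fn βi) (hZj : Zj = Fn βj) (hZk : Zk = Fn βk) :
    s = π (((βj + βk + 1) * (βk + βj) * Zi + (βi + βk + 1) * (βi + βk) * Zj +
        (βi + βj + 1) * (βj + βi) * Zk) /
      ((βi + βj) * (βi + βk) * (βj + βk))) :=
  stmt_4_general π hπ1 s a₀ a₁ a₂ ha₂ Fn hFn βi βj βk hij hik hjk Zi Zj Zk hZi hZj hZk
end

section
/- In the basis setting for the new conventional 3-threshold scheme, let β, β' ∈ K be distinct with π(β + β') ≠ 1, and let s ∈ F. Then the map Ψ_s : K × K → K × K defined by Ψ_s(a₀, a₁) = ( a₀ + a₁·β + (π(a₁) + s)·β² , a₀ + a₁·β' + (π(a₁) + s)·β'² ) is a bijection. In particular, for each pair of share values (z, z') ∈ K × K there is exactly one choice of randomness (a₀, a₁) producing those two shares. -/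
/-!
Subtracting the two shares eliminates `a₀` and, since `β² - β'² = (β - β')(β + β')`, leaves
`(β - β') (a₁ + (π a₁ + s) γ)` with `γ = β + β'`. The rank-one perturbation `x ↦ x + π x • γ`
of the identity is invertible as soon as `1 + π γ ≠ 0`, with inverse
`w ↦ w - (π w / (1 + π γ)) • γ`; in characteristic 2 this is the condition `π (β + β') ≠ 1`.
Hence the difference of the shares determines `a₁`, and then the first share determines `a₀`.
-/

open Function

theorem LinearMap.bijective_add_smul_of_one_add_ne_zero {F M : Type*} [Field F] [AddCommGroup M]
    [Module F M] (f : M →ₗ[F] F) {v : M} (hv : 1 + f v ≠ 0) :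
    Bijective fun x => x + f x • v := by
  refine bijective_iff_has_inverse.mpr ⟨fun w => w - (f w / (1 + f v)) • v, fun x => ?_, fun w => ?_⟩
  · have : (f x + f x * f v) / (1 + f v) = f x := by field_simp
    simp only [map_add, map_smul, smul_eq_mul, this, add_sub_cancel_right]
  · have : f w - f w / (1 + f v) * f v = f w / (1 + f v) := by field_simp; ring
    simp only [map_sub, map_smul, smul_eq_mul, this, sub_add_cancel]

theorem Function.Bijective.prodMk_add {A B C : Type*} [AddGroup A] {h : B → C}
    (hh : Bijective h) (φ : B → A) : Bijective fun p : A × B => (p.1 + φ p.2, h p.2) := by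
  refine ⟨fun ⟨a, b⟩ ⟨a', b'⟩ hab => ?_, fun ⟨z, c⟩ => ?_⟩
  · obtain ⟨ha, hb⟩ := Prod.mk.inj hab
    obtain rfl : b = b' := hh.injective hb
    obtain rfl : a = a' := add_right_cancel ha
    rfl
  · obtain ⟨b, rfl⟩ := hh.surjective c
    exact ⟨(z - φ b, b), by simp⟩

theorem bijective_shares_of_one_add_ne_zero {F K : Type*} [Field F] [Field K] [Algebra F K]
    (π : K →ₗ[F] F) {β β' : K} (hβ : β ≠ β') (hπβ : 1 + π (β + β') ≠ 0) (s : F) :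
    Bijective fun p : K × K =>
      (p.1 + p.2 * β + algebraMap F K (π p.2 + s) * β ^ 2,
       p.1 + p.2 * β' + algebraMap F K (π p.2 + s) * β' ^ 2) := by
  have hdiff : Bijective fun a : K => (β - β') * (a + algebraMap F K (π a + s) * (β + β')) := by
    have hshift : Bijective fun a : K => a + π a • (β + β') + s • (β + β') :=
      (Equiv.addRight _).bijective.comp (π.bijective_add_smul_of_one_add_ne_zero hπβ)
    convert (mulLeft_bijective₀ _ (sub_ne_zero.mpr hβ)).comp hshift using 2 with a
    simp only [comp_apply, map_add, Algebra.smul_def]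
    ring
  have hsub : Involutive fun q : K × K => (q.1, q.1 - q.2) := fun q => by simp
  convert hsub.bijective.comp (hdiff.prodMk_add fun a => a * β + algebraMap F K (π a + s) * β ^ 2)
    using 2 with p
  ext <;> simp only [comp_apply] <;> ring

theorem stmt_6_general {F K : Type*} [Field F] [Field K] [Algebra F K] [CharP K 2]
    (π : K →ₗ[F] F)
    (β β' : K) (hβ : β ≠ β') (hπβ : π (β + β') ≠ 1) (s : F) :
    Function.Bijective (fun p : K × K =>
      (p.1 + p.2 * β + algebraMap F K (π p.2 + s) * β ^ 2,
       p.1 + p.2 * β' + algebraMap F K (π p.2 + s) * β' ^ 2)) := by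
  have : CharP F 2 := (algebraMap F K).charP (algebraMap F K).injective 2
  exact bijective_shares_of_one_add_ne_zero π hβ (fun h => hπβ (CharTwo.add_eq_zero.mp h).symm) s

/-- In the basis setting, if the two distinct evaluation points `β, β'` satisfy
`π (β + β') ≠ 1`, then the sharing map `(a₀, a₁) ↦ (share at β, share at β')`
is a bijection of `K × K`; each pair of share values arises from exactly one
choice of randomness. -/
theorem stmt_6 {F K : Type*} [Field F] [Field K] [Algebra F K] [CharP K 2] [Finite K]
    (π : K →ₗ[F] F) (hπ1 : π 1 = 1)
    (β β' : K) (hβ : β ≠ β') (hπβ : π (β + β') ≠ 1) (s : F) :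
    Function.Bijective (fun p : K × K =>
      (p.1 + p.2 * β + algebraMap F K (π p.2 + s) * β ^ 2,
       p.1 + p.2 * β' + algebraMap F K (π p.2 + s) * β' ^ 2)) :=
  stmt_6_general π β β' hβ hπβ s
end

section
/- In the basis setting for the new conventional 3-threshold scheme, let β, β' ∈ K be distinct with π(β + β') ≠ 1. Then for all share values z, z' ∈ K and all secrets s₀, s₁ ∈ F, the number of pairs (a₀, a₁) ∈ K × K satisfying a₀ + a₁·β + (π(a₁) + s₀)·β² = z and a₀ + a₁·β' + (π(a₁) + s₀)·β'² = z' equals the number of pairs (a₀, a₁) ∈ K × K satisfying a₀ + a₁·β + (π(a₁) + s₁)·β² = z and a₀ + a₁·β' + (π(a₁) + s₁)·β'² = z'. Hence two ordinary shares reveal no information about the secret (perfect secrecy against two participants). -/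
/-!
Adding `c (X - β)(X - β')` to the share polynomial `a₀ + a₁ X + a₂ X²` leaves the shares at
`β` and `β'` unchanged, moves `(a₀, a₁, a₂)` by `c (-ββ', β + β', -1)`, and hence moves
`a₂ - π a₁` by `-c (1 + π (β + β'))`. When `1 + π (β + β')` is a unit we choose `c` so that this
turns the secret `s₀` into `s₁`; the translation by `c (-ββ', β + β')` is then a bijection
between the two sets of randomness pairs.
-/

section Share

variable {F K : Type*} [CommRing F] [CommRing K] [Algebra F K] (π : K →ₗ[F] F)

/-- The share at `γ` of the polynomial `a₀ + a₁ X + (π a₁ + s) X²`, where `p = (a₀, a₁)`. -/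
def share (s : F) (γ : K) (p : K × K) : K :=
  p.1 + p.2 * γ + algebraMap F K (π p.2 + s) * γ ^ 2

theorem share_add_smul {β β' : K} {s₀ s₁ c : F} (hc : c * (1 + π (β + β')) = s₀ - s₁)
    (γ : K) (p : K × K) :
    share π s₁ γ (p + c • (-(β * β'), β + β')) =
      share π s₀ γ p - algebraMap F K c * ((γ - β) * (γ - β')) := by
  have hπ : π (p + c • (-(β * β'), β + β')).2 = π p.2 + c * π (β + β') := by
    rw [Prod.snd_add, Prod.smul_snd, map_add, map_smul, smul_eq_mul]
  have hs₁ : s₁ = s₀ - c - c * π (β + β') := by linear_combination hc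
  rw [share, share, hπ, hs₁]
  simp only [Prod.fst_add, Prod.snd_add, Prod.smul_fst, Prod.smul_snd]
  simp only [Algebra.smul_def, map_add, map_sub, map_mul]
  ring

theorem natCard_share_eq_of_isUnit (β β' z z' : K) (s₀ s₁ : F)
    (hunit : IsUnit (1 + π (β + β'))) :
    Nat.card {p : K × K // share π s₀ β p = z ∧ share π s₀ β' p = z'} =
      Nat.card {p : K × K // share π s₁ β p = z ∧ share π s₁ β' p = z'} := by
  obtain ⟨c, hc⟩ : ∃ c : F, c * (1 + π (β + β')) = s₀ - s₁ :=
    ⟨(s₀ - s₁) * ↑hunit.unit⁻¹, by rw [mul_assoc, IsUnit.val_inv_mul, mul_one]⟩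
  refine Nat.card_congr (Equiv.subtypeEquiv (Equiv.addRight (c • (-(β * β'), β + β'))) ?_)
  intro p
  simp only [Equiv.coe_addRight, share_add_smul π hc, sub_self, zero_mul, sub_zero, mul_zero]

end Share

theorem stmt_7_general {F K : Type*} [Field F] [Field K] [Algebra F K] [CharP K 2]
    (π : K →ₗ[F] F)
    (β β' : K) (hπβ : π (β + β') ≠ 1)
    (z z' : K) (s₀ s₁ : F) :
    Nat.card {p : K × K //
        p.1 + p.2 * β + algebraMap F K (π p.2 + s₀) * β ^ 2 = z ∧
        p.1 + p.2 * β' + algebraMap F K (π p.2 + s₀) * β' ^ 2 = z'} =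
    Nat.card {p : K × K //
        p.1 + p.2 * β + algebraMap F K (π p.2 + s₁) * β ^ 2 = z ∧
        p.1 + p.2 * β' + algebraMap F K (π p.2 + s₁) * β' ^ 2 = z'} := by
  have : CharP F 2 := (Algebra.charP_iff F K 2).mpr inferInstance
  have hne : 1 + π (β + β') ≠ 0 := fun h => hπβ (CharTwo.add_eq_zero.mp h).symm
  exact natCard_share_eq_of_isUnit π β β' z z' s₀ s₁ hne.isUnit

/-- In the basis setting, if `β ≠ β'` and `π (β + β') ≠ 1`, then for any share
values `z, z'` the number of randomness pairs `(a₀, a₁)` producing those shares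
is the same for any two secrets `s₀, s₁`: two shares leak nothing. -/
theorem stmt_7 {F K : Type*} [Field F] [Field K] [Algebra F K] [CharP K 2] [Finite K]
    (π : K →ₗ[F] F) (hπ1 : π 1 = 1)
    (β β' : K) (hβ : β ≠ β') (hπβ : π (β + β') ≠ 1)
    (z z' : K) (s₀ s₁ : F) :
    Nat.card {p : K × K //
        p.1 + p.2 * β + algebraMap F K (π p.2 + s₀) * β ^ 2 = z ∧
        p.1 + p.2 * β' + algebraMap F K (π p.2 + s₀) * β' ^ 2 = z'} =
    Nat.card {p : K × K //
        p.1 + p.2 * β + algebraMap F K (π p.2 + s₁) * β ^ 2 = z ∧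
        p.1 + p.2 * β' + algebraMap F K (π p.2 + s₁) * β' ^ 2 = z'} :=
  stmt_7_general π β β' hπβ z z' s₀ s₁
end

section
/- In the basis setting for the new conventional 3-threshold scheme, let β ∈ K, z ∈ K, c ∈ F and s ∈ F. Then the number of pairs (a₀, a₁) ∈ K × K satisfying both a₀ + a₁·β + (π(a₁) + s)·β² = z and π(a₁) + s = c equals |K| / |F|. In particular this count does not depend on the secret s, so one ordinary share together with the special share a₂ reveals no information about the secret. -/
/-! The special share pins `a₁` to the fiber `π a₁ = c - s` of the surjective functional `π`,
which has `|K| / |F|` elements, and the ordinary share then determines `a₀ = z - a₁ β - c β²`. -/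

theorem AddMonoidHom.card_fiber_of_surjective {G H : Type*} [AddGroup G] [AddGroup H] [Finite G]
    {f : G →+ H} (hf : Function.Surjective f) (h : H) :
    Nat.card (f ⁻¹' {h}) = Nat.card G / Nat.card H := by
  have hker : Nat.card f.ker * Nat.card H = Nat.card G := by
    rw [← f.ker.card_mul_index, AddSubgroup.index_ker, f.range_eq_top.2 hf, AddSubgroup.card_top]
  rw [Nat.card_congr (f.fiberEquivKerOfSurjective hf h), ← hker,
    Nat.mul_div_cancel _ (Nat.card_pos_iff.2 ⟨⟨h⟩, Finite.of_surjective f hf⟩)]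

def Equiv.subtypeAddEqAndEquiv {A B : Type*} [AddGroup A] (g : B → A) (P : B → Prop) (z : A) :
    {p : A × B // p.1 + g p.2 = z ∧ P p.2} ≃ {b : B // P b} where
  toFun p := ⟨p.1.2, p.2.2⟩
  invFun b := ⟨(z - g b, b), sub_add_cancel z (g b), b.2⟩
  left_inv := by
    rintro ⟨⟨a, b⟩, hab, _⟩
    ext
    · exact sub_eq_of_eq_add hab.symm
    · rfl
  right_inv _ := rfl

theorem stmt_8_general {F K : Type*} [Field F] [Field K] [Algebra F K] [Finite K]
    (π : K →ₗ[F] F) (hπ1 : π 1 = 1)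
    (β : K) (z : K) (c : F) (s : F) :
    Nat.card {p : K × K //
        p.1 + p.2 * β + algebraMap F K (π p.2 + s) * β ^ 2 = z ∧
        π p.2 + s = c} = Nat.card K / Nat.card F := by
  have hπ : Function.Surjective π := fun t => ⟨t • 1, by simp [hπ1]⟩
  calc _ = Nat.card {a₁ : K // π a₁ + s = c} :=
        Nat.card_congr <| (Equiv.subtypeEquivRight fun p => by rw [add_assoc]).trans
          (Equiv.subtypeAddEqAndEquiv (fun a₁ => a₁ * β + algebraMap F K (π a₁ + s) * β ^ 2)
            (fun a₁ => π a₁ + s = c) z)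
    _ = Nat.card (π.toAddMonoidHom ⁻¹' {c - s}) :=
        Nat.card_congr <| Equiv.subtypeEquivRight fun a₁ => eq_sub_iff_add_eq.symm
    _ = Nat.card K / Nat.card F := AddMonoidHom.card_fiber_of_surjective hπ _

/-- In the basis setting, the number of randomness pairs `(a₀, a₁)` producing a
given ordinary share `z` at `β` together with a given special share value
`a₂ = π a₁ + s = c` equals `|K| / |F|`, independently of the secret `s`. -/
theorem stmt_8 {F K : Type*} [Field F] [Field K] [Algebra F K] [CharP K 2] [Finite K]
    (π : K →ₗ[F] F) (hπ1 : π 1 = 1)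
    (β : K) (z : K) (c : F) (s : F) :
    Nat.card {p : K × K //
        p.1 + p.2 * β + algebraMap F K (π p.2 + s) * β ^ 2 = z ∧
        π p.2 + s = c} = Nat.card K / Nat.card F :=
  stmt_8_general π hπ1 β z c s
end

section
/- In the basis setting for the new conventional 3-threshold scheme, let ε : F → ZMod 2 be an additive map with ε(1) = 1, and let β, β' ∈ K be distinct elements that are both even (ε(π(β)) = 0 and ε(π(β')) = 0). Then for every secret s ∈ F, the map Ψ_s : K × K → K × K defined by Ψ_s(a₀, a₁) = ( a₀ + a₁·β + (π(a₁) + s)·β² , a₀ + a₁·β' + (π(a₁) + s)·β'² ) is a bijection; consequently the proposed scheme restricted to even evaluation points has perfect secrecy against any two participants. -/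
/-- In the basis setting, for any two distinct even evaluation points `β, β'`
and any secret `s`, the sharing map `(a₀, a₁) ↦ (share at β, share at β')` is a
bijection of `K × K`: the scheme restricted to even points has perfect secrecy
against any two participants. -/
theorem stmt_10 {F K : Type*} [Field F] [Field K] [Algebra F K] [CharP K 2] [Finite K]
    (π : K →ₗ[F] F) (hπ1 : π 1 = 1)
    (ε : F →+ ZMod 2) (hε1 : ε 1 = 1)
    (β β' : K) (hβ : β ≠ β') (hevβ : ε (π β) = 0) (hevβ' : ε (π β') = 0)
    (s : F) :
    Function.Bijective (fun p : K × K =>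
      (p.1 + p.2 * β + algebraMap F K (π p.2 + s) * β ^ 2,
       p.1 + p.2 * β' + algebraMap F K (π p.2 + s) * β' ^ 2)) := by
  rw [← Finite.injective_iff_bijective]
  intro p q h
  simp only [Prod.mk.injEq, map_add] at h
  obtain ⟨h1, h2⟩ := h
  have hβd : β - β' ≠ 0 := sub_ne_zero.mpr hβ
  have h3 : ((p.2 - q.2) + (algebraMap F K (π p.2) - algebraMap F K (π q.2)) * (β + β'))
      * (β - β') = 0 := by linear_combination h1 - h2
  have h5 : (p.2 - q.2) + (π p.2 - π q.2) • (β + β') = 0 := by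
    have := mul_eq_zero.mp h3
    rcases this with h | h
    · rw [Algebra.smul_def, map_sub]; exact h
    · exact absurd h hβd
  have hc : (π p.2 - π q.2) * (1 + (π β + π β')) = 0 := by
    have := congrArg π h5
    simp only [map_add, map_smul, map_sub, map_zero, smul_eq_mul] at this
    linear_combination this
  have hne : (1 : F) + (π β + π β') ≠ 0 := by
    intro h0
    have := congrArg ε h0
    simp only [map_add, map_zero, hε1, hevβ, hevβ'] at this
    exact one_ne_zero this
  have hpq : π p.2 = π q.2 := by
    rcases mul_eq_zero.mp hc with h | h
    · exact sub_eq_zero.mp h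
    · exact absurd h hne
  have h2eq : p.2 = q.2 := by
    rw [hpq] at h5
    exact sub_eq_zero.mp (by simpa using h5)
  have h1eq : p.1 = q.1 := by
    rw [h2eq] at h1
    exact add_right_cancel (add_right_cancel h1)
  exact Prod.ext h1eq h2eq
end

section
/- In the basis setting for the new conventional 3-threshold scheme, let s ∈ F, a₀, a₁ ∈ K, a₂ = π(a₁) + s, and F(w) = a₀ + a₁·w + a₂·w². Then for any distinct β, β' ∈ K, π( (F(β') − F(β)) / (β' − β) ) = π(a₁)·(1 + π(β + β')) + s·π(β + β'). -/
/-- In the basis setting, the projection of the divided difference of two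
shares quantifies the leaked information:
`π ((F β' - F β) / (β' - β)) = π a₁ · (1 + π (β + β')) + s · π (β + β')`. -/
theorem stmt_12 {F K : Type*} [Field F] [Field K] [Algebra F K] [CharP K 2] [Finite K]
    (π : K →ₗ[F] F) (hπ1 : π 1 = 1)
    (s : F) (a₀ a₁ : K) (a₂ : F) (ha₂ : a₂ = π a₁ + s)
    (Fn : K → K)
    (hFn : ∀ w, Fn w = a₀ + a₁ * w + algebraMap F K a₂ * w ^ 2)
    (β β' : K) (hβ : β ≠ β') :
    π ((Fn β' - Fn β) / (β' - β)) =
      π a₁ * (1 + π (β + β')) + s * π (β + β') := by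
  have hd : β' - β ≠ 0 := sub_ne_zero.mpr (Ne.symm hβ)
  have key : (Fn β' - Fn β) / (β' - β) = a₁ + a₂ • (β + β') := by
    rw [hFn, hFn, Algebra.smul_def, div_eq_iff hd]
    ring
  rw [key, map_add, map_smul, ha₂, smul_eq_mul]
  ring
end

section
/- In the basis setting for the new conventional 3-threshold scheme, let s ∈ F, a₀, a₁ ∈ K, a₂ = π(a₁) + s, and F(w) = a₀ + a₁·w + a₂·w². If β, β' ∈ K are distinct and satisfy π(β + β') = 1, then s = π( (F(β') − F(β)) / (β' − β) ); that is, two such shares completely determine the secret, so the scheme would be insecure if evaluation points with π(β + β') = 1 were allowed. -/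
/-- In the basis setting, if the two distinct evaluation points satisfy
`π (β + β') = 1`, then the two shares determine the secret:
`s = π ((F β' - F β) / (β' - β))`. -/
theorem stmt_13 {F K : Type*} [Field F] [Field K] [Algebra F K] [CharP K 2] [Finite K]
    (π : K →ₗ[F] F) (hπ1 : π 1 = 1)
    (s : F) (a₀ a₁ : K) (a₂ : F) (ha₂ : a₂ = π a₁ + s)
    (Fn : K → K)
    (hFn : ∀ w, Fn w = a₀ + a₁ * w + algebraMap F K a₂ * w ^ 2)
    (β β' : K) (hβ : β ≠ β') (hπβ : π (β + β') = 1) :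
    s = π ((Fn β' - Fn β) / (β' - β)) := by
  have h2 : (2 : F) = 0 := by
    apply (algebraMap F K).injective
    rw [map_ofNat, map_zero]
    exact_mod_cast CharP.cast_eq_zero K 2
  have hd : β' - β ≠ 0 := sub_ne_zero.mpr (Ne.symm hβ)
  have hq : (Fn β' - Fn β) / (β' - β) = a₁ + algebraMap F K a₂ * (β' + β) := by
    rw [hFn, hFn, div_eq_iff hd]; ring
  rw [hq]
  have hsmul : algebraMap F K a₂ * (β' + β) = a₂ • (β' + β) := by
    rw [Algebra.smul_def]
  rw [hsmul, map_add, map_smul, add_comm β' β, hπβ, smul_eq_mul, mul_one, ha₂]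
  linear_combination (-π a₁) * h2
end
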